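/- (Claim 5, first part) Let k ≥ 2, n ≥ 2 be integers and let A ⊆ [k]^n be a nonempty compressed set. Let p be the minimal index for which A ∩ B_p ≠ ∅. Then d(B_{≥p+1}) ⊆ d(A). -/

import Mathlib

/-!
Every slice of a compressed set is an initial segment of the `≤`-order. Points with more zeros
come first in this order, and among the points with `q` zeros the least one is `1…10…0`. Hence two
compressions carry a point of `A ∩ B_p` to `w = 1…10…0 ∈ A ∩ B_p`. A point `z ∈ d(B_{≥p+1})` has
at least `p + 2` zeros, so one of its zero coordinates `i` is a `1`-coordinate of `w`; compressing
along `i` shows that `z` with `z_i` raised to `1` lies in `A`, whence `z ∈ d(A)`.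
-/

open Finset
open scoped Classical

/-- `R_i(x)`: the set of coordinates of `x` equal to `i`.
The ambient alphabet is `[k+1] = {0,…,k}`. -/
noncomputable def rset {k N : ℕ} (x : Fin N → Fin (k + 1)) (i : ℕ) : Finset (Fin N) :=
  Finset.univ.filter fun j => (x j : ℕ) = i

/-- the strict binary order on finite sets of coordinates:
`X <_bin Y` iff `X ≠ Y` and `max (X Δ Y) ∈ Y`. -/
def binLT {N : ℕ} (X Y : Finset (Fin N)) : Prop :=
  ∃ m ∈ Y, m ∉ X ∧ ∀ j : Fin N, ((j ∈ X ∧ j ∉ Y) ∨ (j ∈ Y ∧ j ∉ X)) → j ≤ m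

/-- the strict `≤`-order on `[k+1]^N`: `x < y` iff `|R_0(x)| > |R_0(y)|`, or
`|R_0(x)| = |R_0(y)|` and for the largest `i` with `R_i(x) ≠ R_i(y)` we have
`max (R_i(x) Δ R_i(y)) ∈ R_i(y)`. -/
def plt {k N : ℕ} (x y : Fin N → Fin (k + 1)) : Prop :=
  (rset y 0).card < (rset x 0).card ∨
    ((rset x 0).card = (rset y 0).card ∧
      ∃ i : ℕ, binLT (rset x i) (rset y i) ∧ ∀ j : ℕ, i < j → rset x j = rset y j)

/-- the `≤`-order on `[k+1]^N`. -/
def ple {k N : ℕ} (x y : Fin N → Fin (k + 1)) : Prop := x = y ∨ plt x y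

/-- `B` is an initial segment of the `≤`-order. -/
def isInitSeg {k N : ℕ} (B : Finset (Fin N → Fin (k + 1))) : Prop :=
  ∀ y ∈ B, ∀ x, ple x y → x ∈ B

/-- the `d`-shadow: all points obtained from a point of `A` by flipping one
nonzero coordinate to `0`. -/
noncomputable def dShadow {k N : ℕ} (A : Finset (Fin N → Fin (k + 1))) :
    Finset (Fin N → Fin (k + 1)) :=
  A.biUnion fun x =>
    (Finset.univ.filter fun i => x i ≠ 0).image fun i => Function.update x i 0

/-- the initial segment of the `≤`-order on `[k+1]^N` of cardinality `m`. -/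
noncomputable def initSeg (k N m : ℕ) : Finset (Fin N → Fin (k + 1)) :=
  Finset.univ.filter fun x => (Finset.univ.filter fun y => ple y x).card ≤ m

/-- the `C_s`-compression of `A ⊆ [k+1]^(n+1)`: replace each slice
`A_{s,t} = {y : t_s y ∈ A}` by the initial segment of the same size. -/
noncomputable def compress {k n : ℕ} (s : Fin (n + 1)) (A : Finset (Fin (n + 1) → Fin (k + 1))) :
    Finset (Fin (n + 1) → Fin (k + 1)) :=
  Finset.univ.biUnion fun t : Fin (k + 1) =>
    (initSeg k n
        (Finset.univ.filter fun y : Fin n → Fin (k + 1) => s.insertNth t y ∈ A).card).image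
      fun y => s.insertNth t y

/-- `A` is compressed if every `C_s`-compression fixes it. -/
def IsCompressed {k n : ℕ} (A : Finset (Fin (n + 1) → Fin (k + 1))) : Prop :=
  ∀ s : Fin (n + 1), compress s A = A

/-- `B_r`: points with exactly `r` zero coordinates. -/
noncomputable def Bexact (k N r : ℕ) : Finset (Fin N → Fin (k + 1)) :=
  Finset.univ.filter fun x => (rset x 0).card = r

/-- `B_{≥r}`: points with at least `r` zero coordinates. -/
noncomputable def Bge (k N r : ℕ) : Finset (Fin N → Fin (k + 1)) :=
  Finset.univ.filter fun x => r ≤ (rset x 0).card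

/-- `m(x)`: the largest coordinate value of `x`. -/
noncomputable def mval {k N : ℕ} (x : Fin N → Fin (k + 1)) : ℕ :=
  Finset.univ.sup fun i => (x i : ℕ)

/-- the class `C_X`: points with maximal coordinate `s`, attained exactly on `X`,
and exactly `r` zero coordinates. -/
noncomputable def classSet (k N s r : ℕ) (X : Finset (Fin N)) : Finset (Fin N → Fin (k + 1)) :=
  Finset.univ.filter fun x => mval x = s ∧ rset x s = X ∧ (rset x 0).card = r

/-- `[m]^N = {0,…,m−1}^N`. -/
noncomputable def box (k N m : ℕ) : Finset (Fin N → Fin (k + 1)) :=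
  Finset.univ.filter fun x => ∀ i, (x i : ℕ) < m

/-- `{1,…,s−1}^N`. -/
noncomputable def box1 (k N s : ℕ) : Finset (Fin N → Fin (k + 1)) :=
  Finset.univ.filter fun x => ∀ i, 1 ≤ (x i : ℕ) ∧ (x i : ℕ) ≤ s - 1

/-- `B` is a down-set. -/
def isDownSet {k N : ℕ} (B : Finset (Fin N → Fin (k + 1))) : Prop :=
  ∀ y ∈ B, ∀ x : Fin N → Fin (k + 1), (∀ j, (x j : ℕ) ≤ (y j : ℕ)) → x ∈ B

lemma val_one_of_one_le {k : ℕ} (hk : 1 ≤ k) : ((1 : Fin (k + 1)) : ℕ) = 1 := by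
  rw [Fin.val_one', Nat.mod_eq_of_lt (by omega)]

lemma mem_rset {k N : ℕ} {x : Fin N → Fin (k + 1)} {i : ℕ} {j : Fin N} :
    j ∈ rset x i ↔ (x j : ℕ) = i := by
  simp [rset]

lemma card_rset_le {k N : ℕ} (x : Fin N → Fin (k + 1)) (i : ℕ) : (rset x i).card ≤ N := by
  simpa using card_le_univ (rset x i)

lemma rset_eq_empty {k N : ℕ} (x : Fin N → Fin (k + 1)) {i : ℕ} (hi : k < i) : rset x i = ∅ := by
  ext j
  simp only [mem_rset, notMem_empty, iff_false]
  omega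

lemma val_succAbove {N : ℕ} (s : Fin (N + 1)) (i : Fin N) :
    (s.succAbove i : ℕ) = if (i : ℕ) < s then (i : ℕ) else (i : ℕ) + 1 := by
  unfold Fin.succAbove
  split_ifs <;> simp_all [Fin.lt_def]

lemma card_rset_eq_removeNth {k N : ℕ} (s : Fin (N + 1)) (x : Fin (N + 1) → Fin (k + 1))
    (i : ℕ) :
    (rset x i).card = (rset (s.removeNth x) i).card + if (x s : ℕ) = i then 1 else 0 := by
  rw [rset, rset, card_filter, card_filter, Fin.sum_univ_succAbove _ s, add_comm]
  rfl

lemma card_rset_update_add {k N : ℕ} (x : Fin (N + 1) → Fin (k + 1)) (s : Fin (N + 1))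
    (t : Fin (k + 1)) (i : ℕ) :
    (rset (Function.update x s t) i).card + (if (x s : ℕ) = i then 1 else 0) =
      (rset x i).card + if (t : ℕ) = i then 1 else 0 := by
  rw [card_rset_eq_removeNth s, card_rset_eq_removeNth s x, Fin.removeNth_update,
    Function.update_self]
  ring

lemma eq_of_rset_eq {k N : ℕ} {x y : Fin N → Fin (k + 1)}
    (h : ∀ i, 0 < i → rset x i = rset y i) : x = y := by
  funext j
  have hx := h (x j)
  have hy := h (y j)
  simp only [Finset.ext_iff, mem_rset] at hx hy
  apply Fin.val_injective
  by_cases hx0 : (x j : ℕ) = 0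
  · by_cases hy0 : (y j : ℕ) = 0
    · omega
    · exact (hy (by omega) j).mpr rfl
  · exact ((hx (by omega) j).mp rfl).symm

lemma binLT_or_binLT {N : ℕ} {X Y : Finset (Fin N)} (h : X ≠ Y) : binLT X Y ∨ binLT Y X := by
  have hD : (symmDiff X Y).Nonempty := by
    rwa [nonempty_iff_ne_empty, Ne, ← bot_eq_empty, symmDiff_eq_bot]
  have hmax : ∀ j, (j ∈ X ∧ j ∉ Y) ∨ (j ∈ Y ∧ j ∉ X) → j ≤ (symmDiff X Y).max' hD :=
    fun j hj => le_max' _ j (mem_symmDiff.mpr hj)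
  rcases mem_symmDiff.mp (max'_mem _ hD) with ⟨hX, hY⟩ | ⟨hY, hX⟩
  · exact Or.inr ⟨_, hX, hY, fun j hj => hmax j (hj.symm)⟩
  · exact Or.inl ⟨_, hY, hX, hmax⟩

lemma exists_top_rset_ne {k N : ℕ} {x y : Fin N → Fin (k + 1)} (hxy : x ≠ y) :
    ∃ i, rset x i ≠ rset y i ∧ ∀ j, i < j → rset x j = rset y j := by
  have hex : ∃ i, ∀ j, i < j → rset x j = rset y j :=
    ⟨k, fun j hj => by rw [rset_eq_empty x hj, rset_eq_empty y hj]⟩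
  refine ⟨Nat.find hex, fun heq => ?_, Nat.find_spec hex⟩
  rcases hi : Nat.find hex with _ | i
  · exact hxy (eq_of_rset_eq fun j hj => Nat.find_spec hex j (by omega))
  · refine Nat.find_min hex (show i < Nat.find hex by omega) fun j hj => ?_
    rcases (show j = i + 1 ∨ i + 1 < j by omega) with rfl | hj
    · rwa [← hi]
    · exact Nat.find_spec hex j (by omega)

/-- The `≤`-least point of `B_q`: ones followed by `q` zeros. -/
noncomputable def onesThenZeros (k N q : ℕ) : Fin N → Fin (k + 1) :=
  fun j => if (j : ℕ) < N - q then 1 else 0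

section onesThenZeros

variable {k N q : ℕ}

lemma val_onesThenZeros (hk : 1 ≤ k) (j : Fin N) :
    (onesThenZeros k N q j : ℕ) = if (j : ℕ) < N - q then 1 else 0 := by
  unfold onesThenZeros
  split_ifs
  · exact val_one_of_one_le hk
  · rfl

lemma mem_rset_onesThenZeros (hk : 1 ≤ k) {i : ℕ} {j : Fin N} :
    j ∈ rset (onesThenZeros k N q) i ↔ (i = 1 ∧ (j : ℕ) < N - q) ∨ (i = 0 ∧ N - q ≤ (j : ℕ)) := by
  rw [mem_rset, val_onesThenZeros hk]
  split_ifs <;> omega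

lemma card_rset_zero_onesThenZeros (hk : 1 ≤ k) (hq : q ≤ N) :
    (rset (onesThenZeros k N q) 0).card = q := by
  have hsplit := card_filter_add_card_filter_not (s := (univ : Finset (Fin N)))
    (fun j : Fin N => (j : ℕ) < N - q)
  have hzeros : rset (onesThenZeros k N q) 0 = univ.filter fun j : Fin N => ¬ (j : ℕ) < N - q := by
    ext j
    simp only [mem_rset_onesThenZeros hk, mem_filter, mem_univ, true_and]
    omega
  rw [Fin.card_filter_val_lt, card_univ, Fintype.card_fin] at hsplit
  rw [hzeros]
  omega

lemma insertNth_one_onesThenZeros (s : Fin (N + 1)) (hs : (s : ℕ) < N + 1 - q) :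
    s.insertNth 1 (onesThenZeros k N q) = onesThenZeros k (N + 1) q := by
  funext j
  rcases eq_or_ne j s with rfl | hne
  · rw [Fin.insertNth_apply_same, onesThenZeros, if_pos hs]
  · obtain ⟨i, rfl⟩ := Fin.exists_succAbove_eq hne
    rw [Fin.insertNth_apply_succAbove, onesThenZeros, onesThenZeros]
    refine if_congr ?_ rfl rfl
    rw [val_succAbove]
    split_ifs <;> omega

end onesThenZeros

section order

variable {k N q : ℕ}

/- The top disagreement can only be at the value `1`, at a position `m < N - q` where `z` is `0`;
as `z` agrees with `onesThenZeros` above `m`, it also vanishes on the last `q` positions. -/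
lemma lt_card_rset_zero_of_binLT_onesThenZeros (hk : 1 ≤ k) {z : Fin N → Fin (k + 1)} {i : ℕ}
    (hbin : binLT (rset z i) (rset (onesThenZeros k N q) i))
    (hup : ∀ j, i < j → rset z j = rset (onesThenZeros k N q) j) :
    q < (rset z 0).card := by
  obtain ⟨m, hmw, hmz, hmax⟩ := hbin
  have hi : i ≠ 0 := by
    rintro rfl
    rw [eq_of_rset_eq hup] at hmz
    exact hmz hmw
  rw [mem_rset_onesThenZeros hk] at hmw
  obtain ⟨rfl, hm⟩ : i = 1 ∧ (m : ℕ) < N - q := by omega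
  have hz01 : ∀ j, (z j : ℕ) ≤ 1 := fun j => by
    by_contra! hj
    have hmem : j ∈ rset z (z j) := mem_rset.mpr rfl
    rw [hup _ hj, mem_rset_onesThenZeros hk] at hmem
    omega
  have hsub : insert m (rset (onesThenZeros k N q) 0) ⊆ rset z 0 := by
    intro j hj
    rw [mem_rset]
    rcases mem_insert.mp hj with rfl | hj
    · have := hz01 j
      rw [mem_rset] at hmz
      omega
    · have hjq : N - q ≤ (j : ℕ) := by simpa [mem_rset_onesThenZeros hk] using hj
      have hjw : j ∉ rset (onesThenZeros k N q) 1 := by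
        rw [mem_rset_onesThenZeros hk]
        omega
      have hjm : ¬ j ≤ m := fun h => by rw [Fin.le_def] at h; omega
      have := hz01 j
      have : (z j : ℕ) ≠ 1 := fun h => hjm (hmax j (Or.inl ⟨mem_rset.mpr h, hjw⟩))
      omega
  have := card_le_card hsub
  rw [card_insert_of_notMem (by simp [mem_rset_onesThenZeros hk]; omega),
    card_rset_zero_onesThenZeros hk (by omega)] at this
  omega

lemma lt_card_rset_zero_of_plt_onesThenZeros (hk : 1 ≤ k) (hq : q ≤ N)
    {z : Fin N → Fin (k + 1)} (hz : plt z (onesThenZeros k N q)) : q < (rset z 0).card := by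
  rcases hz with hlt | ⟨-, i, hbin, hup⟩
  · rwa [card_rset_zero_onesThenZeros hk hq] at hlt
  · exact lt_card_rset_zero_of_binLT_onesThenZeros hk hbin hup

lemma onesThenZeros_ple (hk : 1 ≤ k) (v : Fin N → Fin (k + 1)) :
    ple (onesThenZeros k N (rset v 0).card) v := by
  set w := onesThenZeros k N (rset v 0).card
  by_cases hvw : w = v
  · exact Or.inl hvw
  obtain ⟨i, hne, hup⟩ := exists_top_rset_ne hvw
  refine Or.inr (Or.inr ⟨card_rset_zero_onesThenZeros hk (card_rset_le v 0), ?_⟩)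
  rcases binLT_or_binLT hne with hwv | hvw'
  · exact ⟨i, hwv, hup⟩
  · exact absurd (lt_card_rset_zero_of_binLT_onesThenZeros hk hvw' fun j hj => (hup j hj).symm)
      (lt_irrefl _)

end order

section initSeg

variable {k N m : ℕ} {u v : Fin N → Fin (k + 1)}

lemma mem_initSeg_of_forall_ple (hu : u ∈ initSeg k N m) (h : ∀ z, ple z v → ple z u) :
    v ∈ initSeg k N m := by
  simp only [initSeg, mem_filter, mem_univ, true_and] at hu ⊢
  exact (card_le_card fun z hz => by simpa using h z (by simpa using hz)).trans hu

lemma card_rset_zero_le_of_plt (h : plt u v) : (rset v 0).card ≤ (rset u 0).card := by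
  rcases h with h | ⟨h, -⟩ <;> omega

lemma mem_initSeg_of_card_lt (hu : u ∈ initSeg k N m)
    (h : (rset u 0).card < (rset v 0).card) : v ∈ initSeg k N m := by
  refine mem_initSeg_of_forall_ple hu fun z hz => Or.inr (Or.inl ?_)
  rcases hz with rfl | hz
  · exact h
  · exact h.trans_le (card_rset_zero_le_of_plt hz)

lemma onesThenZeros_mem_initSeg (hk : 1 ≤ k) (hu : u ∈ initSeg k N m) :
    onesThenZeros k N (rset u 0).card ∈ initSeg k N m := by
  refine mem_initSeg_of_forall_ple hu fun z hz => ?_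
  rcases hz with rfl | hz
  · exact onesThenZeros_ple hk u
  · exact Or.inr (Or.inl (lt_card_rset_zero_of_plt_onesThenZeros hk (card_rset_le u 0) hz))

end initSeg

namespace IsCompressed

variable {k n : ℕ} {A : Finset (Fin (n + 1) → Fin (k + 1))} {u v : Fin (n + 1) → Fin (k + 1)}

lemma mem_iff (hA : IsCompressed A) (s : Fin (n + 1)) (x : Fin (n + 1) → Fin (k + 1)) :
    x ∈ A ↔ s.removeNth x ∈ initSeg k n
      (univ.filter fun y : Fin n → Fin (k + 1) => s.insertNth (x s) y ∈ A).card := by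
  conv_lhs => rw [← hA s]
  simp only [compress, mem_biUnion, mem_image, mem_univ, true_and]
  constructor
  · rintro ⟨t, y, hy, rfl⟩
    rwa [Fin.insertNth_apply_same, Fin.removeNth_insertNth]
  · exact fun h => ⟨x s, s.removeNth x, h, Fin.insertNth_self_removeNth s x⟩

lemma mem_of_removeNth (hA : IsCompressed A) (hu : u ∈ A) {s : Fin (n + 1)} (hs : v s = u s)
    (h : ∀ m, s.removeNth u ∈ initSeg k n m → s.removeNth v ∈ initSeg k n m) : v ∈ A := by
  rw [hA.mem_iff s] at hu ⊢
  rw [hs]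
  exact h _ hu

lemma mem_of_card_lt (hA : IsCompressed A) (hu : u ∈ A) {s : Fin (n + 1)} (hs : v s = u s)
    (h : (rset u 0).card < (rset v 0).card) : v ∈ A := by
  refine hA.mem_of_removeNth hu hs fun _ hm => mem_initSeg_of_card_lt hm ?_
  rw [card_rset_eq_removeNth s u, card_rset_eq_removeNth s v, hs] at h
  omega

lemma insertNth_onesThenZeros_mem (hk : 1 ≤ k) (hA : IsCompressed A) (hu : u ∈ A)
    (s : Fin (n + 1)) :
    s.insertNth (u s) (onesThenZeros k n (rset (s.removeNth u) 0).card) ∈ A :=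
  hA.mem_of_removeNth hu (Fin.insertNth_apply_same _ _ _) fun _ hm => by
    rw [Fin.removeNth_insertNth]
    exact onesThenZeros_mem_initSeg hk hm

end IsCompressed

lemma update_mem_dShadow {k N : ℕ} {A : Finset (Fin N → Fin (k + 1))} {x : Fin N → Fin (k + 1)}
    (hx : x ∈ A) {i : Fin N} (hi : x i ≠ 0) : Function.update x i 0 ∈ dShadow A :=
  mem_biUnion.mpr ⟨x, hx, mem_image.mpr ⟨i, by simpa using hi, rfl⟩⟩

lemma card_rset_zero_of_mem_dShadow_Bge {k N r : ℕ} {z : Fin (N + 1) → Fin (k + 1)}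
    (hz : z ∈ dShadow (Bge k (N + 1) r)) : r + 1 ≤ (rset z 0).card := by
  simp only [dShadow, Bge, mem_biUnion, mem_image, mem_filter, mem_univ, true_and] at hz
  obtain ⟨y, hy, i, hi, rfl⟩ := hz
  have := card_rset_update_add y i 0 0
  have hi' : (y i : ℕ) ≠ 0 := fun h => hi (Fin.ext h)
  simp only [hi', if_false, Fin.val_zero, if_true] at this
  omega

lemma card_rset_zero_update_one {k N : ℕ} (hk : 1 ≤ k) {z : Fin (N + 1) → Fin (k + 1)}
    {i : Fin (N + 1)} (hzi : z i = 0) :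
    (rset (Function.update z i 1) 0).card + 1 = (rset z 0).card := by
  have := card_rset_update_add z i 1 0
  rwa [hzi, val_one_of_one_le hk, if_neg one_ne_zero, Fin.val_zero, if_pos rfl] at this

lemma exists_mem_rset_zero_lt {k N q : ℕ} (hk : 1 ≤ k) {z : Fin N → Fin (k + 1)}
    (hz : q < (rset z 0).card) : ∃ i ∈ rset z 0, (i : ℕ) < N - q := by
  by_contra! h
  have hqN : q ≤ N := hz.le.trans (card_rset_le z 0)
  have hsub : rset z 0 ⊆ rset (onesThenZeros k N q) 0 := fun i hi => by
    rw [mem_rset_onesThenZeros hk]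
    exact Or.inr ⟨rfl, h i hi⟩
  have := card_le_card hsub
  rw [card_rset_zero_onesThenZeros hk hqN] at this
  omega

lemma IsCompressed.onesThenZeros_mem {k n p : ℕ} (hk : 1 ≤ k)
    {A : Finset (Fin (n + 1) → Fin (k + 1))} (hA : IsCompressed A) {a : Fin (n + 1) → Fin (k + 1)}
    (ha : a ∈ A) (hap : (rset a 0).card = p) (hpn : p < n) : onesThenZeros k (n + 1) p ∈ A := by
  obtain ⟨j, -, hj⟩ := exists_mem_notMem_of_card_lt_card
    (s := rset a 0) (t := univ) (by simpa [hap] using hpn.trans (Nat.lt_succ_self n))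
  have hja : (a j : ℕ) ≠ 0 := fun h => hj (mem_rset.mpr h)
  set v : Fin (n + 1) → Fin (k + 1) := j.insertNth (a j) (onesThenZeros k n p)
  have hv : v ∈ A := by
    have := hA.insertNth_onesThenZeros_mem hk ha j
    rwa [show (rset (j.removeNth a) 0).card = p by
      have := card_rset_eq_removeNth j a 0
      rw [if_neg hja] at this
      omega] at this
  -- a coordinate `j' ∈ {0, 1}` other than `j`, where `v` has the value `1`
  set j' := j.succAbove ⟨0, by omega⟩
  have hj' : (j' : ℕ) ≤ 1 := by
    rw [val_succAbove]
    split_ifs <;> simp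
  have hvj' : v j' = 1 := by
    simp only [v, j', Fin.insertNth_apply_succAbove, onesThenZeros]
    exact if_pos (by omega)
  have hrv : (rset (j'.removeNth v) 0).card = p := by
    have hvp : (rset v 0).card = p := by
      simpa [v, hja, card_rset_zero_onesThenZeros hk hpn.le] using card_rset_eq_removeNth j v 0
    have := card_rset_eq_removeNth j' v 0
    rw [hvj', val_one_of_one_le hk, if_neg one_ne_zero] at this
    omega
  have := hA.insertNth_onesThenZeros_mem hk hv j'
  rwa [hvj', hrv, insertNth_one_onesThenZeros j' (by omega)] at this

theorem claim5_first_general (k n : ℕ) (hk : 1 ≤ k)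
    (A : Finset (Fin (n + 1) → Fin (k + 1))) (hA : IsCompressed A)
    (p : ℕ) (hp : (A ∩ Bexact k (n + 1) p).Nonempty) :
    dShadow (Bge k (n + 1) (p + 1)) ⊆ dShadow A := by
  intro z hz
  obtain ⟨a, ha⟩ := hp
  rw [mem_inter, Bexact, mem_filter] at ha
  obtain ⟨haA, -, hap⟩ := ha
  have hzp : p + 2 ≤ (rset z 0).card := card_rset_zero_of_mem_dShadow_Bge hz
  have hpn : p < n := by have := card_rset_le z 0; omega
  have hw := hA.onesThenZeros_mem hk haA hap hpn
  obtain ⟨i, hzi, hi⟩ := exists_mem_rset_zero_lt (q := p) (z := z) hk (by omega)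
  have hwi : onesThenZeros k (n + 1) p i = 1 := if_pos hi
  have hzi0 : z i = 0 := Fin.ext (mem_rset.mp hzi)
  have hv : Function.update z i 1 ∈ A := by
    refine hA.mem_of_card_lt hw (s := i) (by rw [Function.update_self, hwi]) ?_
    rw [card_rset_zero_onesThenZeros hk (by omega)]
    have := card_rset_zero_update_one hk hzi0
    omega
  have := update_mem_dShadow hv (i := i) (by simp [Fin.ext_iff]; omega)
  rwa [Function.update_idem, ← hzi0, Function.update_eq_self] at this

/-- **Claim 5, first part.** Let `k ≥ 2`, `n ≥ 2`, let `A ⊆ [k]^n` be a nonempty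
compressed set and let `p` be the minimal index with `A ∩ B_p ≠ ∅`. Then
`d(B_{≥ p+1}) ⊆ d(A)`. (Dimension `n ≥ 2` is rendered as `n + 1` with `n ≥ 1`;
alphabet `[k]` with `k ≥ 2` as `Fin (k+1)` with `k ≥ 1`.) -/
theorem claim5_first (k n : ℕ) (hk : 1 ≤ k) (hn : 1 ≤ n)
    (A : Finset (Fin (n + 1) → Fin (k + 1))) (hA : IsCompressed A) (hAne : A.Nonempty)
    (p : ℕ) (hp : (A ∩ Bexact k (n + 1) p).Nonempty)
    (hpmin : ∀ q < p, A ∩ Bexact k (n + 1) q = ∅) :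
    dShadow (Bge k (n + 1) (p + 1)) ⊆ dShadow A :=
  claim5_first_general k n hk A hA p hp
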